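/- Let T be an r×s Latin rectangle on the symbols {1,…,n} with r, s ≤ n, and for each i ∈ {1,…,n} let N(i) denote the number of times the symbol i occurs in T. Then T can be extended to a Latin square of order n if and only if N(i) ≥ r + s − n for every i ∈ {1,…,n}. -/

import Mathlib

/-!
Necessity: in the first `r` rows of the square a symbol `v` occurs `r` times, and at most `n - s`
of these occurrences lie outside the first `s` columns, one per column.

Sufficiency: add one column at a time. Join each row of `T` to the symbols it misses; every row
has degree `n - s`, and a symbol `v` has degree `r - N(v) ≤ n - s`. A matching that saturates the
rows and every symbol of full degree `n - s` (i.e. with `N(v) = r + s - n`) is a new column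
preserving the condition. It exists by Hall's theorem: padding the graph with `n - r` dummy rows,
each joined to all symbols of smaller degree with weight proportional to the missing degree, gives
a fractional perfect matching. Once `T` is `r × n`, its transpose satisfies the condition with
equality, and the same column step completes the square.
-/

open Finset Function

theorem exists_injective_mem_of_weights {ι α K : Type*} [Fintype ι] [Fintype α] [DecidableEq α]
    [Semiring K] [LinearOrder K] [IsStrictOrderedRing K]
    (t : ι → Finset α) (w : ι → α → K) {d : K} (hd : 0 < d) (hw : ∀ i a, 0 ≤ w i a)
    (hrow : ∀ i, ∑ a, w i a = d) (hcol : ∀ a, ∑ i, w i a ≤ d)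
    (hsupp : ∀ i a, a ∉ t i → w i a = 0) :
    ∃ f : ι → α, Injective f ∧ ∀ i, f i ∈ t i := by
  rw [← all_card_le_biUnion_card_iff_existsInjective']
  intro S
  have key : (#S : K) * d ≤ #(S.biUnion t) * d := calc
    (#S : K) * d = ∑ i ∈ S, ∑ a, w i a := by simp [hrow]
    _ = ∑ i ∈ S, ∑ a ∈ S.biUnion t, w i a := sum_congr rfl fun i hi =>
      (sum_subset (subset_univ _) fun a _ ha =>
        hsupp i a fun h => ha (mem_biUnion.2 ⟨i, hi, h⟩)).symm
    _ = ∑ a ∈ S.biUnion t, ∑ i ∈ S, w i a := sum_comm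
    _ ≤ ∑ a ∈ S.biUnion t, d := sum_le_sum fun a _ =>
      (sum_le_sum_of_subset_of_nonneg (subset_univ S) fun i _ _ => hw i a).trans (hcol a)
    _ = #(S.biUnion t) * d := by simp
  exact_mod_cast le_of_mul_le_mul_right key hd

theorem card_filter_forall_ne_add_card {κ α : Type*} [Fintype κ] [Fintype α] [DecidableEq α]
    {f : κ → α} (hf : Injective f) :
    #{a | ∀ j, f j ≠ a} + Fintype.card κ = Fintype.card α := by
  have : ({a | ∀ j, f j ≠ a} : Finset α) = (univ.image f)ᶜ := by ext; simp
  rw [this, card_compl, card_image_of_injective _ hf, card_univ]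
  have := Fintype.card_le_of_injective f hf
  omega

section Regular

variable {ι α : Type*} [Fintype ι] [Fintype α] [DecidableEq α] (t : ι → Finset α) {d : ℕ}

theorem sum_card_filter_mem : ∑ a, #{i | a ∈ t i} = ∑ i, #(t i) := by
  simp only [card_filter]
  rw [sum_comm]
  simp

theorem exists_injective_sum_mem_of_regular (hd : 0 < d) (ht : ∀ i, #(t i) = d)
    (hdeg : ∀ a, #{i | a ∈ t i} ≤ d) {δ : Type*} [Fintype δ]
    (hδ : Fintype.card ι + Fintype.card δ = Fintype.card α) :
    ∃ f : ι ⊕ δ → α, Injective f ∧ (∀ i, f (.inl i) ∈ t i) ∧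
      ∀ b, #{i | f (.inr b) ∈ t i} < d := by
  set deg : α → ℕ := fun a => #{i | a ∈ t i} with hdeg_def
  set m := Fintype.card δ
  have hdeg_sum : ∑ a, deg a = Fintype.card ι * d := by
    simp [hdeg_def, sum_card_filter_mem, ht, mul_comm]
  let t' : ι ⊕ δ → Finset α := Sum.elim t fun _ => ({a | deg a < d} : Finset α)
  let w : ι ⊕ δ → α → ℚ :=
    Sum.elim (fun i a => if a ∈ t i then 1 else 0) fun _ a => ((d : ℚ) - deg a) / m
  have hw : ∀ x a, 0 ≤ w x a := by
    rintro (i | b) a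
    · simp only [w, Sum.elim_inl]
      split_ifs <;> norm_num
    · have := hdeg a
      simp only [w, Sum.elim_inr]
      exact div_nonneg (by rw [sub_nonneg]; exact_mod_cast this) m.cast_nonneg
  have hrow : ∀ x, ∑ a, w x a = d := by
    rintro (i | b)
    · simp [w, ht]
    · have hm0 : (m : ℚ) ≠ 0 := Nat.cast_ne_zero.2 (Fintype.card_pos_iff.2 ⟨b⟩).ne'
      have hsum : ∑ a, ((d : ℚ) - deg a) = m * d := by
        rw [sum_sub_distrib, ← Nat.cast_sum univ deg, hdeg_sum, sum_const, card_univ,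
          nsmul_eq_mul, ← hδ]
        push_cast
        ring
      simp only [w, Sum.elim_inr, ← sum_div, hsum]
      field_simp
  have hcol : ∀ a, ∑ x, w x a ≤ d := by
    intro a
    rw [Fintype.sum_sum_type]
    simp only [w, Sum.elim_inl, Sum.elim_inr, sum_boole, sum_const, card_univ, nsmul_eq_mul]
    rcases Nat.eq_zero_or_pos m with hm0 | hm0
    · simpa [hm0] using hdeg a
    · rw [mul_div_cancel₀ _ (by positivity)]
      simp [deg]
  have hsupp : ∀ x a, a ∉ t' x → w x a = 0 := by
    rintro (i | b) a ha
    · have : a ∉ t i := ha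
      simp [w, this]
    · have : deg a = d := le_antisymm (hdeg a) (by simpa [t'] using ha)
      simp [w, this]
  obtain ⟨f, hf, hft⟩ := exists_injective_mem_of_weights t' w (by positivity) hw hrow hcol hsupp
  exact ⟨f, hf, fun i => hft (.inl i), fun b => by simpa [t'] using hft (.inr b)⟩

theorem exists_injective_mem_of_regular (hd : 0 < d) (ht : ∀ i, #(t i) = d)
    (hdeg : ∀ a, #{i | a ∈ t i} ≤ d) :
    ∃ f : ι → α, Injective f ∧ (∀ i, f i ∈ t i) ∧
      ∀ a, #{i | a ∈ t i} = d → a ∈ Set.range f := by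
  have hcard : Fintype.card ι * d ≤ Fintype.card α * d := calc
    Fintype.card ι * d = ∑ a, #{i | a ∈ t i} := by simp [sum_card_filter_mem, ht, mul_comm]
    _ ≤ ∑ _a : α, d := sum_le_sum fun a _ => hdeg a
    _ = Fintype.card α * d := by simp
  have hδ : Fintype.card ι + Fintype.card (Fin (Fintype.card α - Fintype.card ι))
      = Fintype.card α := by
    have := Nat.le_of_mul_le_mul_right hcard hd
    simp only [Fintype.card_fin]
    omega
  obtain ⟨f, hf, hft, hfδ⟩ := exists_injective_sum_mem_of_regular t hd ht hdeg hδ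
  have hf_surj : Surjective f :=
    ((Fintype.bijective_iff_injective_and_card f).2 ⟨hf, by rw [Fintype.card_sum, hδ]⟩).2
  refine ⟨f ∘ Sum.inl, hf.comp Sum.inl_injective, hft, fun a ha => ?_⟩
  obtain ⟨x | b, rfl⟩ := hf_surj a
  · exact ⟨x, rfl⟩
  · exact absurd ha (hfδ b).ne

end Regular

variable {ι κ α : Type*}

def IsLatinRectangle (M : ι → κ → α) : Prop :=
  (∀ i, Injective (M i)) ∧ ∀ j, Injective fun i => M i j

theorem IsLatinRectangle.transpose {M : ι → κ → α} (h : IsLatinRectangle M) :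
    IsLatinRectangle fun j i => M i j :=
  h.symm

section symbolCount

variable [Fintype ι] [Fintype κ] [DecidableEq α]

def symbolCount (M : ι → κ → α) (v : α) : ℕ :=
  #{p : ι × κ | M p.1 p.2 = v}

theorem symbolCount_transpose (M : ι → κ → α) (v : α) :
    symbolCount (fun j i => M i j) v = symbolCount M v :=
  card_equiv (Equiv.prodComm κ ι) (by simp)

theorem symbolCount_eq_card_filter_exists {M : ι → κ → α} (hM : ∀ i, Injective (M i))
    (v : α) : symbolCount M v = #{i | ∃ j, M i j = v} := by
  apply card_nbij Prod.fst
  · intro p hp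
    simp only [coe_filter, mem_univ, true_and, Set.mem_ofPred_eq] at hp ⊢
    exact ⟨p.2, hp⟩
  · rintro ⟨i, j⟩ hp ⟨i', j'⟩ hq (rfl : i = i')
    simp only [coe_filter, mem_univ, true_and, Set.mem_ofPred_eq] at hp hq
    rw [hM i (hp.trans hq.symm)]
  · intro i hi
    obtain ⟨j, hj⟩ : ∃ j, M i j = v := by simpa using hi
    exact ⟨(i, j), by simpa using hj, rfl⟩

theorem card_filter_forall_ne_add_symbolCount {M : ι → κ → α} (hM : ∀ i, Injective (M i))
    (v : α) : #{i | ∀ j, M i j ≠ v} + symbolCount M v = Fintype.card ι := by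
  rw [symbolCount_eq_card_filter_exists hM, add_comm]
  simpa using card_filter_add_card_filter_not (s := univ) fun i => ∃ j, M i j = v

theorem symbolCount_eq_card_of_bijective {M : ι → κ → α} (hM : ∀ i, Bijective (M i))
    (v : α) : symbolCount M v = Fintype.card ι := by
  rw [symbolCount_eq_card_filter_exists fun i => (hM i).1]
  simp [(hM _).2 v]

theorem symbolCount_snoc {s : ℕ} (T : ι → Fin s → α) (c : ι → α) (v : α) :
    symbolCount (fun i => Fin.snoc (T i) (c i) : ι → Fin (s + 1) → α) v
      = symbolCount T v + #{i | c i = v} := by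
  simp only [symbolCount, card_filter, Fintype.sum_prod_type, ← sum_add_distrib,
    Fin.sum_univ_castSucc, Fin.snoc_castSucc, Fin.snoc_last]

end symbolCount

theorem IsLatinRectangle.snoc {s : ℕ} {T : ι → Fin s → α} (hT : IsLatinRectangle T)
    {c : ι → α} (hc : Injective c) (hcT : ∀ i, c i ∉ Set.range (T i)) :
    IsLatinRectangle (fun i => Fin.snoc (T i) (c i) : ι → Fin (s + 1) → α) := by
  refine ⟨fun i => Fin.snoc_injective_of_injective (hT.1 i) (hcT i), fun j => ?_⟩
  induction j using Fin.lastCases with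
  | last => simpa using hc
  | cast j => simpa using hT.2 j

theorem exists_new_column [Fintype ι] [Fintype κ] [Fintype α] [DecidableEq α]
    (hκα : Fintype.card κ < Fintype.card α) {T : ι → κ → α} (hT : ∀ i, Injective (T i))
    (hN : ∀ v, Fintype.card ι + Fintype.card κ ≤ Fintype.card α + symbolCount T v) :
    ∃ c : ι → α, Injective c ∧ (∀ i, c i ∉ Set.range (T i)) ∧
      ∀ v, Fintype.card α + symbolCount T v = Fintype.card ι + Fintype.card κ →
        v ∈ Set.range c := by
  have hmissing (i) := card_filter_forall_ne_add_card (hT i)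
  have hrows (v) := card_filter_forall_ne_add_symbolCount hT v
  obtain ⟨c, hc, hcT, hcrit⟩ := exists_injective_mem_of_regular
    (fun i => ({v | ∀ j, T i j ≠ v} : Finset α)) (d := Fintype.card α - Fintype.card κ)
    (by omega) (fun i => by have := hmissing i; omega)
    fun v => by
      have := hrows v
      have := hN v
      simp only [mem_filter, mem_univ, true_and]
      omega
  refine ⟨c, hc, fun i ⟨j, hj⟩ => (mem_filter.1 (hcT i)).2 j hj, fun v hv => hcrit v ?_⟩
  have := hrows v
  simp only [mem_filter, mem_univ, true_and]
  omega

theorem exists_extend_columns {r s n : ℕ} (hs : s ≤ n) {T : Fin r → Fin s → Fin n}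
    (hT : IsLatinRectangle T) (hN : ∀ v, r + s ≤ n + symbolCount T v) :
    ∃ T' : Fin r → Fin n → Fin n, IsLatinRectangle T' ∧
      ∀ i j, T' i (Fin.castLE hs j) = T i j := by
  induction hs using Nat.decreasingInduction with
  | self => exact ⟨T, hT, fun i j => by simp⟩
  | of_succ s hs ih =>
    obtain ⟨c, hc, hcT, hcrit⟩ := exists_new_column (by simpa using hs) hT.1 (by simpa using hN)
    obtain ⟨T', hT', hT'T⟩ := ih (hT.snoc hc hcT) fun v => by
      rw [symbolCount_snoc]
      rcases (hN v).lt_or_eq with hlt | heq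
      · omega
      · obtain ⟨i, rfl⟩ := hcrit v (by simpa using heq.symm)
        have : 0 < #{i' | c i' = c i} := card_pos.2 ⟨i, by simp⟩
        omega
    exact ⟨T', hT', fun i j => by simpa using hT'T i j.castSucc⟩

theorem le_symbolCount_of_extends {r s n : ℕ} (hr : r ≤ n) (hs : s ≤ n)
    {T : Fin r → Fin s → Fin n} (hT : ∀ i, Injective (T i)) {L : Fin n → Fin n → Fin n}
    (hL : IsLatinRectangle L) (hLT : ∀ i j, L (Fin.castLE hr i) (Fin.castLE hs j) = T i j)
    (v : Fin n) : r + s ≤ n + symbolCount T v := by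
  choose c hc using fun i => Finite.surjective_of_injective (hL.1 (Fin.castLE hr i)) v
  have hc_inj : Injective c := fun i i' h =>
    Fin.castLE_injective hr (hL.2 (c i) ((hc i).trans (h ▸ hc i').symm))
  have hin : #{i | (c i : ℕ) < s} ≤ symbolCount T v := by
    rw [symbolCount_eq_card_filter_exists hT]
    refine card_le_card fun i hi => ?_
    simp only [mem_filter, mem_univ, true_and] at hi ⊢
    exact ⟨⟨c i, hi⟩, by rw [← hLT]; exact hc i⟩
  have hout : #{i | ¬ (c i : ℕ) < s} ≤ n - s := calc
    _ ≤ #(Ico s n) := card_le_card_of_injOn (fun i => (c i : ℕ))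
      (fun i hi => mem_Ico.2 ⟨not_lt.1 (mem_filter.1 hi).2, (c i).isLt⟩)
      fun i _ j _ h => hc_inj (Fin.ext h)
    _ = n - s := Nat.card_Ico s n
  have := card_filter_add_card_filter_not (s := univ) fun i => (c i : ℕ) < s
  simp only [card_univ, Fintype.card_fin] at this
  omega

/-- Ryser's theorem: Let T be an r×s Latin rectangle on the symbols
{1,…,n} with r, s ≤ n (no symbol repeated in any row or column), and let N(i) be the
number of occurrences of symbol i in T.  Then T extends to a Latin square of order n
(occupying the top-left r×s corner) iff N(i) ≥ r + s − n for every symbol i. -/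
theorem ryser_theorem
    (r s n : ℕ) (hr : r ≤ n) (hs : s ≤ n)
    (T : Fin r → Fin s → Fin n)
    (hrow : ∀ i : Fin r, Function.Injective (T i))
    (hcol : ∀ j : Fin s, Function.Injective (fun i : Fin r => T i j)) :
    (∃ L : Fin n → Fin n → Fin n,
      (∀ i : Fin n, Function.Injective (L i)) ∧
      (∀ j : Fin n, Function.Injective (fun i : Fin n => L i j)) ∧
      (∀ (i : Fin r) (j : Fin s), L (Fin.castLE hr i) (Fin.castLE hs j) = T i j)) ↔
    (∀ v : Fin n,
      (r : ℤ) + (s : ℤ) - (n : ℤ) ≤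
        ((Finset.univ.filter (fun p : Fin r × Fin s => T p.1 p.2 = v)).card : ℤ)) := by
  change _ ↔ ∀ v, (r : ℤ) + s - n ≤ symbolCount T v
  constructor
  · rintro ⟨L, hLrow, hLcol, hLT⟩ v
    have := le_symbolCount_of_extends hr hs hrow ⟨hLrow, hLcol⟩ hLT v
    omega
  · intro h
    obtain ⟨T', hT', hT'T⟩ := exists_extend_columns hs ⟨hrow, hcol⟩ fun v => by
      have := h v
      omega
    obtain ⟨L, hL, hLT'⟩ := exists_extend_columns hr hT'.transpose fun v => by
      rw [symbolCount_transpose,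
        symbolCount_eq_card_of_bijective fun i => Finite.injective_iff_bijective.1 (hT'.1 i)]
      simp
    exact ⟨fun i j => L j i, hL.2, hL.1, fun i j => by simp only [hLT', hT'T]⟩
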